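/- Let M, Q, J, R be real n×n matrices and G a real n×m matrix, where M is symmetric positive definite, Q is symmetric, M and Q commute, J is skew-symmetric, and R is symmetric positive semidefinite. Let U : ℝ → ℝᵐ be continuous and X : ℝ → ℝⁿ differentiable with M X'(t) = (J - R) Q X(t) + G U(t). Then for all t₀ ≤ t₁, the discrete Hamiltonian Ĥ(t) = ½ X(t)ᵀ Q M X(t) satisfies the passivity inequality Ĥ(t₁) - Ĥ(t₀) = ∫_{t₀}^{t₁} (Y(t)ᵀU(t) - (QX(t))ᵀR(QX(t))) dt ≤ ∫_{t₀}^{t₁} Y(t)ᵀ U(t) dt, where Y(t) = Gᵀ Q X(t). -/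

import Mathlib

/-!
Since `Q * M` is symmetric, the derivative of `½ Xᵀ Q M X` is `X'ᵀ Q M X = (M X')ᵀ (Q X)`,
using `M Q = Q M` and `Mᵀ = M`. Substituting the dynamics for `M X'`, the `J`-term vanishes by
skew-symmetry, the `G`-term is the supplied power `Yᵀ U`, and the `R`-term is the dissipation
`(Q X)ᵀ R (Q X) ≥ 0`. The fundamental theorem of calculus integrates this power balance.
-/

open Matrix intervalIntegral

section Calculus

variable {𝕜 : Type*} [NontriviallyNormedField 𝕜] {n : Type*} [Fintype n]
  {f g : 𝕜 → n → 𝕜} {f' g' : n → 𝕜} {t : 𝕜}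

theorem HasDerivAt.dotProduct (hf : HasDerivAt f f' t) (hg : HasDerivAt g g' t) :
    HasDerivAt (fun s => f s ⬝ᵥ g s) (f' ⬝ᵥ g t + f t ⬝ᵥ g') t := by
  have hfi := hasDerivAt_pi.1 hf
  have hgi := hasDerivAt_pi.1 hg
  simpa only [_root_.dotProduct, ← Finset.sum_add_distrib] using
    HasDerivAt.fun_sum (u := Finset.univ) fun i _ => (hfi i).fun_mul (hgi i)

theorem HasDerivAt.mulVec {m : Type*} [Fintype m] (A : Matrix m n 𝕜) (hf : HasDerivAt f f' t) :
    HasDerivAt (fun s => A *ᵥ f s) (A *ᵥ f') t := by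
  refine hasDerivAt_pi.2 fun i => ?_
  simpa [Matrix.mulVec] using (hasDerivAt_const t (A i)).dotProduct hf

theorem HasDerivAt.dotProduct_mulVec_self {A : Matrix n n 𝕜} (hA : A.IsSymm)
    (hf : HasDerivAt f f' t) :
    HasDerivAt (fun s => f s ⬝ᵥ A *ᵥ f s) (2 * (f' ⬝ᵥ A *ᵥ f t)) t := by
  convert hf.dotProduct (hf.mulVec A) using 1
  rw [two_mul, ← dotProduct_transpose_mulVec, hA.eq]

end Calculus

theorem Matrix.dotProduct_mulVec_self_eq_zero_of_transpose_eq_neg {R n : Type*} [CommRing R]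
    [NoZeroDivisors R] [CharZero R] [Fintype n] {J : Matrix n n R} (hJ : Jᵀ = -J) (x : n → R) :
    x ⬝ᵥ J *ᵥ x = 0 := by
  have : x ⬝ᵥ J *ᵥ x = -(x ⬝ᵥ J *ᵥ x) := by
    conv_lhs => rw [← dotProduct_transpose_mulVec, hJ, neg_mulVec, dotProduct_neg]
  exact self_eq_neg.mp this

theorem portHamiltonian_power_balance {R ι κ : Type*} [CommRing R]
    [NoZeroDivisors R] [CharZero R] [Fintype ι] [Fintype κ] {M Q J D : Matrix ι ι R}
    {G : Matrix ι κ R} (hM : Mᵀ = M) (hMQ : M * Q = Q * M) (hJ : Jᵀ = -J) {x v : ι → R}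
    {u : κ → R} (h : M *ᵥ v = (J - D) *ᵥ (Q *ᵥ x) + G *ᵥ u) :
    v ⬝ᵥ (Q * M) *ᵥ x = Gᵀ *ᵥ (Q *ᵥ x) ⬝ᵥ u - Q *ᵥ x ⬝ᵥ D *ᵥ (Q *ᵥ x) := by
  rw [← hMQ, ← mulVec_mulVec, ← hM, dotProduct_transpose_mulVec, h, sub_mulVec,
    dotProduct_add, dotProduct_sub, dotProduct_mulVec_self_eq_zero_of_transpose_eq_neg hJ,
    dotProduct_comm _ u, dotProduct_transpose_mulVec]
  ring

/-- **Passivity of the discrete port-Hamiltonian DG model.**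
With `M = Mᵀ > 0`, `Q = Qᵀ` commuting with `M`, `J = -Jᵀ`, `R = Rᵀ ≥ 0`,
continuous input `U` and differentiable state `X` satisfying
`M X' = (J - R) Q X + G U`, the discrete Hamiltonian `Ĥ = ½ Xᵀ Q M X` obeys, for
all `t₀ ≤ t₁`, `Ĥ(t₁) - Ĥ(t₀) = ∫_{t₀}^{t₁} (Yᵀ U - (QX)ᵀ R (QX)) ≤ ∫_{t₀}^{t₁} Yᵀ U`
with output `Y = Gᵀ Q X`. -/
theorem discrete_pH_passivity
    {n m : ℕ} (M Q J R : Matrix (Fin n) (Fin n) ℝ) (G : Matrix (Fin n) (Fin m) ℝ)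
    (hM : M.PosDef) (hQ : Q.IsSymm) (hMQ : M * Q = Q * M)
    (hJ : Jᵀ = -J) (hR : R.PosSemidef)
    (U : ℝ → Fin m → ℝ) (hU : Continuous U)
    (X : ℝ → Fin n → ℝ) (hX : Differentiable ℝ X)
    (hode : ∀ t, M.mulVec (deriv X t)
      = (J - R).mulVec (Q.mulVec (X t)) + G.mulVec (U t)) :
    ∀ t₀ t₁ : ℝ, t₀ ≤ t₁ →
      ((1/2) * (X t₁ ⬝ᵥ (Q * M).mulVec (X t₁))
          - (1/2) * (X t₀ ⬝ᵥ (Q * M).mulVec (X t₀))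
        = ∫ t in t₀..t₁, (Gᵀ.mulVec (Q.mulVec (X t)) ⬝ᵥ U t
            - Q.mulVec (X t) ⬝ᵥ R.mulVec (Q.mulVec (X t))))
      ∧ ((1/2) * (X t₁ ⬝ᵥ (Q * M).mulVec (X t₁))
          - (1/2) * (X t₀ ⬝ᵥ (Q * M).mulVec (X t₀))
        ≤ ∫ t in t₀..t₁, Gᵀ.mulVec (Q.mulVec (X t)) ⬝ᵥ U t) := by
  intro t₀ t₁ ht
  have hMsymm : Mᵀ = M := isHermitian_iff_isSymm.mp hM.isHermitian
  have hQMsymm : (Q * M).IsSymm := by rw [IsSymm, transpose_mul, hMsymm, hQ.eq, hMQ]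
  have hpower : ∀ t, HasDerivAt (fun s => (1/2) * (X s ⬝ᵥ (Q * M) *ᵥ X s))
      (Gᵀ *ᵥ (Q *ᵥ X t) ⬝ᵥ U t - Q *ᵥ X t ⬝ᵥ R *ᵥ (Q *ᵥ X t)) t := fun t => by
    have hquad := ((hX t).hasDerivAt.dotProduct_mulVec_self hQMsymm).const_mul (1/2 : ℝ)
    refine hquad.congr_deriv ?_
    rw [portHamiltonian_power_balance hMsymm hMQ hJ (hode t)]
    ring
  have hXc := hX.continuous
  have hsupply : Continuous fun t => Gᵀ *ᵥ (Q *ᵥ X t) ⬝ᵥ U t := by fun_prop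
  have hdissipation : Continuous fun t => Q *ᵥ X t ⬝ᵥ R *ᵥ (Q *ᵥ X t) := by fun_prop
  have hbalance := (integral_eq_sub_of_hasDerivAt (fun t _ => hpower t)
    ((hsupply.sub hdissipation).intervalIntegrable t₀ t₁)).symm
  refine ⟨hbalance, hbalance ▸ integral_mono_on ht
    ((hsupply.sub hdissipation).intervalIntegrable t₀ t₁) (hsupply.intervalIntegrable t₀ t₁)
    fun t _ => sub_le_self _ ?_⟩
  simpa using hR.dotProduct_mulVec_nonneg (Q *ᵥ X t)
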